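/- arXiv:1603.01573 — 5 statements merged into one kernel-verified Lean document; each statement's English description precedes it below -/
import Mathlib

section
/- If X is an m-point subset of R^n, then the number of linearly separable dichotomies of X is at most 2 * sum_{i=0}^{n} binomial(m-1, i), where a dichotomy (X+, X-) of X is an ordered partition of X into two disjoint sets whose union is X, and it is linearly separable if there exist reals y_1,...,y_{n+1} with sum_j x_j y_j > y_{n+1} for all x in X+ and sum_j x_j y_j < y_{n+1} for all x in X-. -/
/-- A dichotomy `(P, M)` of points in `ℝⁿ` is linearly separable if some affine
hyperplane strictly separates `P` from `M`. -/
def LinSep (n : ℕ) (P M : Finset (Fin n → ℝ)) : Prop :=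
  ∃ (y : Fin n → ℝ) (c : ℝ),
    (∀ x ∈ P, ∑ j, x j * y j > c) ∧ (∀ x ∈ M, ∑ j, x j * y j < c)

open Finset

section Arrangement

variable {V : Type} [AddCommGroup V] [Module ℝ V]

/-- A sign vector `s` is realizable for the functionals `f` if some point gives every
functional a nonzero value with the prescribed sign. -/
def Rz (m : ℕ) (f : Fin m → V →ₗ[ℝ] ℝ) (s : Fin m → Bool) : Prop :=
  ∃ v : V, ∀ i, f i v ≠ 0 ∧ (0 < f i v ↔ s i = true)

open Classical in
noncomputable def Ncount (m : ℕ) (f : Fin m → V →ₗ[ℝ] ℝ) : ℕ :=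
  (Finset.univ.filter (fun s : Fin m → Bool => Rz m f s)).card

open Classical in
lemma Ncount_eq_zero (m : ℕ) (f : Fin m → V →ₗ[ℝ] ℝ) (i : Fin m) (h : f i = 0) :
    Ncount m f = 0 := by
  rw [Ncount, Finset.card_eq_zero, Finset.filter_eq_empty_iff]
  rintro s - ⟨v, hv⟩
  exact (hv i).1 (by simp [h])

open Classical in
lemma Ncount_le_two (f : Fin 1 → V →ₗ[ℝ] ℝ) : Ncount 1 f ≤ 2 := by
  calc Ncount 1 f ≤ (Finset.univ : Finset (Fin 1 → Bool)).card := Finset.card_filter_le _ _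
  _ = 2 := by simp

open Classical in
/-- Deletion-restriction inequality for the number of realizable sign vectors. -/
lemma Ncount_step (m : ℕ) (f : Fin (m + 1) → V →ₗ[ℝ] ℝ) :
    Ncount (m + 1) f ≤
      Ncount m (fun i => f i.castSucc) +
      Ncount m (fun i =>
        (f i.castSucc).comp (LinearMap.ker (f (Fin.last m))).subtype) := by
  set L := f (Fin.last m) with hL
  set g : Fin m → (LinearMap.ker L : Submodule ℝ V) →ₗ[ℝ] ℝ :=
    fun i => (f i.castSucc).comp (LinearMap.ker L).subtype with hg
  set A : Finset (Fin (m+1) → Bool) := Finset.univ.filter (fun s => Rz (m+1) f s) with hA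
  have hcard : A.card = ∑ t ∈ (Finset.univ : Finset (Fin m → Bool)),
      (A.filter (fun s => s ∘ Fin.castSucc = t)).card :=
    Finset.card_eq_sum_card_fiberwise (fun x _ => Finset.mem_univ _)
  have key : ∀ t : Fin m → Bool,
      (A.filter (fun s => s ∘ Fin.castSucc = t)).card ≤
        (if Rz m (fun i => f i.castSucc) t then 1 else 0) +
        (if Rz m g t then 1 else 0) := by
    intro t
    set fib := A.filter (fun s => s ∘ Fin.castSucc = t) with hfib
    have hsub : fib ⊆ {Fin.snoc t true, Fin.snoc t false} := by
      intro s hs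
      rw [hfib, Finset.mem_filter] at hs
      have hst : s = Fin.snoc t (s (Fin.last m)) := by
        funext i
        cases i using Fin.lastCases with
        | last => simp
        | cast i => rw [Fin.snoc_castSucc, ← hs.2]; rfl
      rcases Bool.eq_false_or_eq_true (s (Fin.last m)) with h | h <;> rw [h] at hst
      · rw [hst]; exact Finset.mem_insert_self _ _
      · rw [hst]; exact Finset.mem_insert_of_mem (Finset.mem_singleton_self _)
    rcases Nat.eq_zero_or_pos fib.card with h0 | hpos
    · omega
    · -- fiber nonempty: the deleted sign vector is realizable
      obtain ⟨s, hs⟩ := Finset.card_pos.mp hpos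
      rw [hfib, Finset.mem_filter] at hs
      obtain ⟨hsA, hst⟩ := hs
      rw [hA, Finset.mem_filter] at hsA
      obtain ⟨-, v, hv⟩ := hsA
      have hdel : Rz m (fun i => f i.castSucc) t := by
        refine ⟨v, fun i => ?_⟩
        have := hv i.castSucc
        rwa [show s i.castSucc = t i from congrFun hst i] at this
      rw [if_pos hdel]
      rcases Nat.lt_or_ge fib.card 2 with h1 | h2
      · omega
      · -- fiber has two elements: both extensions realizable, restrict to the kernel
        have hpair : fib = ({Fin.snoc t true, Fin.snoc t false} : Finset (Fin (m+1) → Bool)) := by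
          apply Finset.eq_of_subset_of_card_le hsub
          calc ({Fin.snoc t true, Fin.snoc t false} : Finset (Fin (m+1) → Bool)).card ≤ 2 :=
            Finset.card_insert_le _ _ |>.trans (by simp)
          _ ≤ fib.card := h2
        have hmem : ∀ b : Bool, Rz (m+1) f (Fin.snoc t b) := by
          intro b
          have : (Fin.snoc t b : Fin (m+1) → Bool) ∈ fib := by
            rw [hpair]; cases b <;> simp
          rw [hfib, Finset.mem_filter, hA, Finset.mem_filter] at this
          exact this.1.2
        obtain ⟨v, hv⟩ := hmem true
        obtain ⟨w, hw⟩ := hmem false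
        have hva : 0 < L v := by
          have := (hv (Fin.last m)).2
          rw [Fin.snoc_last] at this
          exact this.mpr rfl
        have hwb : L w < 0 := by
          have h1 := (hw (Fin.last m)).1
          have h2 := (hw (Fin.last m)).2
          rw [Fin.snoc_last] at h2
          have : ¬ (0 < L w) := fun h => absurd (h2.mp h) (by simp)
          rcases lt_trichotomy (L w) 0 with h | h | h
          · exact h
          · exact absurd h h1
          · exact absurd h this
        have hker : Rz m g t := by
          set u : V := (L v) • w + (-(L w)) • v with hu
          have huK : u ∈ LinearMap.ker L := by
            simp only [LinearMap.mem_ker, hu, map_add, map_smul, smul_eq_mul]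
            ring
          refine ⟨⟨u, huK⟩, fun i => ?_⟩
          have hvi := hv i.castSucc
          have hwi := hw i.castSucc
          rw [Fin.snoc_castSucc] at hvi hwi
          have hgi : g i ⟨u, huK⟩ = (L v) * (f i.castSucc w) + (-(L w)) * (f i.castSucc v) := by
            simp [hg, hu, mul_comm]
          rcases Bool.eq_false_or_eq_true (t i) with ht | ht
          case inr => -- both negative
            have h1 : f i.castSucc v < 0 := by
              have := hvi.2; rw [ht] at this
              rcases lt_trichotomy (f i.castSucc v) 0 with h | h | h
              · exact h
              · exact absurd h hvi.1
              · exact absurd h (by simp [this])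
            have h2 : f i.castSucc w < 0 := by
              have := hwi.2; rw [ht] at this
              rcases lt_trichotomy (f i.castSucc w) 0 with h | h | h
              · exact h
              · exact absurd h hwi.1
              · exact absurd h (by simp [this])
            have hneg : g i ⟨u, huK⟩ < 0 := by
              rw [hgi]
              have := mul_pos hva (neg_pos.mpr h2)
              have := mul_pos (neg_pos.mpr hwb) (neg_pos.mpr h1)
              nlinarith
            constructor
            · exact ne_of_lt hneg
            · simp [ht, not_lt_of_gt hneg]
          case inl => -- both positive
            have h1 : 0 < f i.castSucc v := hvi.2.mpr (by rw [ht])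
            have h2 : 0 < f i.castSucc w := hwi.2.mpr (by rw [ht])
            have hposu : 0 < g i ⟨u, huK⟩ := by
              rw [hgi]
              have := mul_pos hva h2
              have := mul_pos (neg_pos.mpr hwb) h1
              nlinarith
            exact ⟨ne_of_gt hposu, by simp [ht, hposu]⟩
        rw [if_pos hker]
        calc fib.card ≤ ({Fin.snoc t true, Fin.snoc t false} :
            Finset (Fin (m+1) → Bool)).card := Finset.card_le_card hsub
        _ ≤ 2 := Finset.card_insert_le _ _ |>.trans (by simp)
  calc Ncount (m+1) f = A.card := rfl
  _ = ∑ t ∈ Finset.univ, (A.filter (fun s => s ∘ Fin.castSucc = t)).card := hcard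
  _ ≤ ∑ t ∈ (Finset.univ : Finset (Fin m → Bool)),
        ((if Rz m (fun i => f i.castSucc) t then 1 else 0) +
         (if Rz m g t then 1 else 0)) := Finset.sum_le_sum (fun t _ => key t)
  _ = Ncount m (fun i => f i.castSucc) + Ncount m g := by
      rw [Finset.sum_add_distrib, Finset.sum_boole, Finset.sum_boole, Ncount, Ncount]
      simp

lemma pascal_sum (m e : ℕ) :
    ∑ i ∈ range (e+1), m.choose i + ∑ i ∈ range e, m.choose i
      = ∑ i ∈ range (e+1), (m+1).choose i := by
  induction e with
  | zero => simp
  | succ e ih =>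
    rw [Finset.sum_range_succ (f := fun i => (m+1).choose i) (n := e+1), ← ih,
        Nat.choose_succ_succ (m) (e),
        Finset.sum_range_succ (f := fun i => m.choose i) (n := e+1),
        Finset.sum_range_succ (f := fun i => m.choose i) (n := e)]
    simp only [Nat.succ_eq_add_one]
    omega

/-- Cover-style bound on the number of realizable sign vectors of `m+1` linear
functionals on a space of dimension at most `d`. -/
theorem Ncount_le : ∀ (m : ℕ) (d : ℕ) (V : Type) [AddCommGroup V]
    [Module ℝ V] [FiniteDimensional ℝ V],
    Module.finrank ℝ V ≤ d → ∀ f : Fin (m+1) → V →ₗ[ℝ] ℝ,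
    Ncount (m+1) f ≤ 2 * ∑ i ∈ range d, m.choose i := by
  intro m
  induction m with
  | zero =>
    intro d V _ _ _ hd f
    rcases Nat.eq_zero_or_pos d with rfl | hdpos
    · have hV : Subsingleton V := by
        rw [← Module.finrank_zero_iff (R := ℝ)]
        omega
      have : f 0 = 0 := by
        ext v
        rw [Subsingleton.elim v 0]
        simp
      rw [Ncount_eq_zero 1 f 0 this]
      simp
    · have h2 : Ncount (0+1) f ≤ 2 := Ncount_le_two f
      have : 1 ≤ ∑ i ∈ range d, Nat.choose 0 i := by
        calc 1 = ∑ i ∈ range 1, Nat.choose 0 i := by simp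
        _ ≤ ∑ i ∈ range d, Nat.choose 0 i := by
            apply Finset.sum_le_sum_of_subset
            exact Finset.range_subset_range.mpr hdpos
      omega
  | succ m ih =>
    intro d V _ _ _ hd f
    by_cases hL : f (Fin.last (m+1)) = 0
    · rw [Ncount_eq_zero _ f _ hL]; exact Nat.zero_le _
    · have hV : Module.finrank ℝ V ≠ 0 := by
        intro h
        have : Subsingleton V := Module.finrank_zero_iff.mp h
        exact hL (by ext v; rw [Subsingleton.elim v 0]; simp)
      obtain ⟨e, rfl⟩ : ∃ e, d = e + 1 := ⟨d - 1, by omega⟩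
      have hkerd : Module.finrank ℝ (LinearMap.ker (f (Fin.last (m+1)))) ≤ e := by
        have := Module.Dual.finrank_ker_add_one_of_ne_zero (K := ℝ) (V₁ := V) hL
        omega
      have h1 := ih (e+1) V hd (fun i => f i.castSucc)
      have h2 := ih e (LinearMap.ker (f (Fin.last (m+1)))) hkerd
        (fun i => (f i.castSucc).comp (LinearMap.ker (f (Fin.last (m+1)))).subtype)
      have h0 := Ncount_step (m+1) f
      have hp := pascal_sum (m) e
      omega

end Arrangement

/-- The affine functional associated to a data point. -/
def affFun (n : ℕ) (x : Fin n → ℝ) : ((Fin n → ℝ) × ℝ) →ₗ[ℝ] ℝ where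
  toFun p := (∑ j, x j * p.1 j) + p.2
  map_add' p q := by
    simp only [Prod.fst_add, Prod.snd_add, Pi.add_apply, mul_add, Finset.sum_add_distrib]
    ring
  map_smul' c p := by
    simp only [Prod.smul_fst, Prod.smul_snd, Pi.smul_apply, smul_eq_mul, RingHom.id_apply]
    rw [mul_add, Finset.mul_sum]
    have : ∀ j ∈ (Finset.univ : Finset (Fin n)), x j * (c * p.1 j) = c * (x j * p.1 j) :=
      fun j _ => by ring
    rw [Finset.sum_congr rfl this]

open scoped Classical in
theorem stmt0 (n m : ℕ) (X : Finset (Fin n → ℝ)) (hX : X.card = m) :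
    (X.powerset.filter (fun P => LinSep n P (X \ P))).card ≤
      2 * ∑ i ∈ Finset.range (n + 1), (m - 1).choose i := by
  rcases m with _ | m
  · -- X is empty
    have : X = ∅ := Finset.card_eq_zero.mp hX
    subst this
    have h1 : (Finset.powerset (∅ : Finset (Fin n → ℝ))).card = 1 := by simp
    have h3 : ((∅ : Finset (Fin n → ℝ)).powerset.filter (fun P => LinSep n P (∅ \ P))).card ≤ 1 :=
      le_trans (Finset.card_filter_le _ _) (le_of_eq h1)
    have h4 : 1 ≤ ∑ i ∈ Finset.range (n + 1), (0-1).choose i := by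
      have h0 : (0:ℕ) ∈ Finset.range (n+1) := by simp
      have := Finset.single_le_sum (f := fun i => (0-1).choose i)
        (fun i _ => Nat.zero_le _) h0
      simpa using this
    omega
  · -- X has m+1 points
    have e : Fin (m+1) ≃ {x // x ∈ X} := ((X.equivFin).trans (finCongr hX)).symm
    set f : Fin (m+1) → ((Fin n → ℝ) × ℝ) →ₗ[ℝ] ℝ := fun i => affFun n (e i) with hf
    have hmain : Ncount (m+1) f ≤ 2 * ∑ i ∈ Finset.range (n + 1), m.choose i := by
      exact Ncount_le m (n+1) _ (by simp) f
    have hinj : (X.powerset.filter (fun P => LinSep n P (X \ P))).card ≤ Ncount (m+1) f := by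
      apply Finset.card_le_card_of_injOn
        (fun P => fun i => decide ((e i : Fin n → ℝ) ∈ P))
      · intro P hP
        rw [Finset.mem_coe, Finset.mem_filter, Finset.mem_powerset] at hP
        obtain ⟨hPX, y, c, hpos, hneg⟩ := hP
        rw [Finset.mem_coe, Finset.mem_filter]
        refine ⟨Finset.mem_univ _, (y, -c), fun i => ?_⟩
        have hx : (e i : Fin n → ℝ) ∈ X := (e i).2
        by_cases hi : (e i : Fin n → ℝ) ∈ P
        · have := hpos _ hi
          have hgt : (0:ℝ) < (∑ j, (e i : Fin n → ℝ) j * y j) + (-c) := by linarith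
          constructor
          · show affFun n (e i) (y, -c) ≠ 0
            simp only [affFun, LinearMap.coe_mk, AddHom.coe_mk]
            linarith
          · show (0 < affFun n (e i) (y, -c)) ↔ _
            simp only [affFun, LinearMap.coe_mk, AddHom.coe_mk]
            simp [hi, hgt]
        · have := hneg _ (Finset.mem_sdiff.mpr ⟨hx, hi⟩)
          have hlt : (∑ j, (e i : Fin n → ℝ) j * y j) + (-c) < 0 := by linarith
          constructor
          · show affFun n (e i) (y, -c) ≠ 0
            simp only [affFun, LinearMap.coe_mk, AddHom.coe_mk]
            linarith
          · show (0 < affFun n (e i) (y, -c)) ↔ _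
            simp only [affFun, LinearMap.coe_mk, AddHom.coe_mk]
            simp [hi, not_lt_of_gt hlt]
      · intro P hP Q hQ hPQ
        rw [Finset.coe_filter, Set.mem_setOf_eq, Finset.mem_powerset] at hP hQ
        apply Finset.ext
        intro x
        constructor
        · intro hx
          have hxX : x ∈ X := hP.1 hx
          have hi := congrFun hPQ (e.symm ⟨x, hxX⟩)
          simp only [Equiv.apply_symm_apply] at hi
          simpa [hx] using hi.symm
        · intro hx
          have hxX : x ∈ X := hQ.1 hx
          have hi := congrFun hPQ (e.symm ⟨x, hxX⟩)
          simp only [Equiv.apply_symm_apply] at hi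
          simpa [hx] using hi
    calc _ ≤ Ncount (m+1) f := hinj
    _ ≤ _ := hmain
end

section
/- For every ε with 0 < ε ≤ 1 there is γ > 0 such that: if X is a finite subset of R^n with |X| ≥ (2+ε)n, then a dichotomy chosen uniformly at random among all 2^{|X|} dichotomies of X is linearly separable with probability at most e^{-γ n}. -/
open Finset

section Aux

open scoped Classical in
lemma shattered_card_le {n : ℕ} (X : Finset (Fin n → ℝ))
    {𝒜 : Finset (Finset (Fin n → ℝ))}
    (h𝒜 : ∀ u ∈ 𝒜, u ⊆ X ∧ LinSep n u (X \ u))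
    {s : Finset (Fin n → ℝ)} (hs : 𝒜.Shatters s) : s.card ≤ n + 1 := by
  by_contra hlt
  push_neg at hlt
  obtain ⟨s', hs's, hs'card⟩ := Finset.exists_subset_card_eq (Nat.succ_le_of_lt hlt)
  have hshat : 𝒜.Shatters s' := hs.mono_right hs's
  -- s' is not affine independent
  have hdep : ¬ AffineIndependent ℝ ((↑) : {x // x ∈ s'} → (Fin n → ℝ)) := by
    intro hind
    have h1 := hind.card_le_finrank_succ
    have h2 : Module.finrank ℝ (vectorSpan ℝ (Set.range ((↑) : {x // x ∈ s'} → (Fin n → ℝ))))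
        ≤ Module.finrank ℝ (Fin n → ℝ) := Submodule.finrank_le _
    rw [Module.finrank_fin_fun] at h2
    rw [Fintype.card_coe, hs'card] at h1
    omega
  obtain ⟨I, p, hpI, hpIc⟩ := Convex.radon_partition hdep
  set t : Finset (Fin n → ℝ) :=
    (Finset.univ.filter (fun z : {x // x ∈ s'} => z ∈ I)).image Subtype.val with ht
  have hts' : t ⊆ s' := by
    intro x hx
    simp only [ht, mem_image, mem_filter] at hx
    obtain ⟨z, _, rfl⟩ := hx
    exact z.2
  obtain ⟨u, hu, hsu⟩ := hshat hts'
  have huX : u ⊆ X := (h𝒜 u hu).1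
  obtain ⟨y, c, hP, hM⟩ := (h𝒜 u hu).2
  have hlin : IsLinearMap ℝ (fun x : Fin n → ℝ => ∑ j, x j * y j) := by
    constructor
    · intro a b; simp [add_mul, Finset.sum_add_distrib]
    · intro r a; simp [Finset.mul_sum, mul_assoc]
  -- image of I lands in t
  have hIt : Subtype.val '' I ⊆ (↑t : Set (Fin n → ℝ)) := by
    rintro x ⟨z, hz, rfl⟩
    simp only [ht, coe_image, Set.mem_image, coe_filter, Set.mem_setOf_eq]
    exact ⟨z, by simp [hz], rfl⟩
  have hIct : Subtype.val '' Iᶜ ⊆ (↑(s' \ t) : Set (Fin n → ℝ)) := by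
    rintro x ⟨z, hz, rfl⟩
    simp only [coe_sdiff, Set.mem_diff, mem_coe]
    refine ⟨z.2, fun hxt => ?_⟩
    simp only [ht, mem_image, mem_filter] at hxt
    obtain ⟨z', ⟨_, hz'I⟩, hzz'⟩ := hxt
    exact hz (by rwa [Subtype.val_injective hzz'] at hz'I)
  -- p is on both sides
  have hgt : p ∈ {x : Fin n → ℝ | ∑ j, x j * y j > c} := by
    refine convexHull_min ?_ (convex_halfSpace_gt hlin c) hpI
    intro x hx
    have hxt : x ∈ t := hIt hx
    have hxu : x ∈ u := by
      have := hsu ▸ hxt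
      exact (mem_inter.mp (hsu ▸ hxt : x ∈ s' ∩ u)).2
    exact hP x hxu
  have hlt' : p ∈ {x : Fin n → ℝ | ∑ j, x j * y j < c} := by
    refine convexHull_min ?_ (convex_halfSpace_lt hlin c) hpIc
    intro x hx
    have hxst : x ∈ s' \ t := by exact_mod_cast hIct hx
    have hxX : x ∈ X := by
      obtain ⟨u₀, hu₀, hsu₀⟩ := hshat.exists_superset
      exact (h𝒜 u₀ hu₀).1 (hsu₀ ((mem_sdiff.mp hxst).1))
    have hxnu : x ∉ u := fun hxu => (mem_sdiff.mp hxst).2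
      (hsu ▸ mem_inter.mpr ⟨(mem_sdiff.mp hxst).1, hxu⟩)
    exact hM x (mem_sdiff.mpr ⟨hxX, hxnu⟩)
  exact absurd hgt (by simpa using le_of_lt hlt')

open scoped Classical in
lemma count_le (n : ℕ) (X : Finset (Fin n → ℝ)) :
    (X.powerset.filter (fun P => LinSep n P (X \ P))).card
      ≤ ∑ k ∈ range (n+2), (X.card).choose k := by
  set 𝒜 := X.powerset.filter (fun P => LinSep n P (X \ P)) with h𝒜def
  have hmem : ∀ u ∈ 𝒜, u ⊆ X ∧ LinSep n u (X \ u) := by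
    intro u hu
    rw [h𝒜def, mem_filter, mem_powerset] at hu
    exact hu
  have h1 : 𝒜.card ≤ 𝒜.shatterer.card := Finset.card_le_card_shatterer 𝒜
  have h2 : 𝒜.shatterer ⊆ (range (n+2)).biUnion (fun k => X.powersetCard k) := by
    intro s hsmem
    have hs := Finset.mem_shatterer.mp hsmem
    have hcard := shattered_card_le X hmem hs
    obtain ⟨u, hu, hsu⟩ := hs.exists_superset
    have hsX : s ⊆ X := hsu.trans (hmem u hu).1
    rw [mem_biUnion]
    exact ⟨s.card, Finset.mem_range.mpr (by omega),
      Finset.mem_powersetCard.mpr ⟨hsX, rfl⟩⟩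
  have h3 : ((range (n+2)).biUnion (fun k => X.powersetCard k)).card
      = ∑ k ∈ range (n+2), (X.card).choose k := by
    rw [Finset.card_biUnion]
    · exact Finset.sum_congr rfl (fun k _ => Finset.card_powersetCard k X)
    · intro a _ b _ hab
      apply Finset.disjoint_left.mpr
      intro s hsa hsb
      rw [Finset.mem_powersetCard] at hsa hsb
      exact hab (by omega)
  exact h1.trans (h3 ▸ Finset.card_le_card h2)

lemma sum_choose_succ (m d : ℕ) :
    ∑ k ∈ range (d + 2), (m + 1).choose k
      = ∑ k ∈ range (d + 2), m.choose k + ∑ k ∈ range (d + 1), m.choose k := by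
  rw [Finset.sum_range_succ' (fun k => (m+1).choose k) (d+1)]
  simp only [Nat.choose_succ_succ, Nat.choose_zero_right]
  rw [Finset.sum_add_distrib]
  rw [Finset.sum_range_succ' (fun k => m.choose k) (d+1)]
  simp [Nat.choose_zero_right]
  ring

lemma central_le (n : ℕ) : (2*n+3).choose (n+2) ≤ 3 * 4 ^ n := by
  induction n with
  | zero => decide
  | succ n ih =>
    have h1 : (2*n+5).choose (n+3) = (2*n+4).choose (n+2) + (2*n+4).choose (n+3) := by
      have := Nat.choose_succ_succ' (2*n+4) (n+2)
      have e1 : 2*n+4+1 = 2*n+5 := by omega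
      have e2 : n+2+1 = n+3 := by omega
      rw [e1, e2] at this
      exact this
    have h2 : (2*n+4).choose (n+2) = (2*n+3).choose (n+1) + (2*n+3).choose (n+2) := by
      have := Nat.choose_succ_succ' (2*n+3) (n+1)
      have e1 : 2*n+3+1 = 2*n+4 := by omega
      have e2 : n+1+1 = n+2 := by omega
      rw [e1, e2] at this
      exact this
    have h3 : (2*n+4).choose (n+3) = (2*n+3).choose (n+2) + (2*n+3).choose (n+3) := by
      have := Nat.choose_succ_succ' (2*n+3) (n+2)
      have e1 : 2*n+3+1 = 2*n+4 := by omega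
      have e2 : n+2+1 = n+3 := by omega
      rw [e1, e2] at this
      exact this
    have h4 : (2*n+3).choose (n+1) = (2*n+3).choose (n+2) := by
      have := Nat.choose_symm (n := 2*n+3) (k := n+2) (by omega)
      have e : 2*n+3-(n+2) = n+1 := by omega
      rw [e] at this
      exact this
    have h5 : (2*n+3).choose (n+3) ≤ (2*n+3).choose (n+2) := by
      have := Nat.choose_le_middle (n+3) (2*n+3)
      have hmid : (2*n+3)/2 = n+1 := by omega
      rw [hmid, h4] at this
      exact this
    have e3 : 2*(n+1)+3 = 2*n+5 := by ring
    have e4 : (n+1)+2 = n+3 := by ring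
    rw [e3, e4]
    have h6 : 3 * 4^(n+1) = 4 * (3 * 4^n) := by ring
    omega

lemma lemA (n m : ℕ) (hn : 1 ≤ n) (hm : 2*n+1 ≤ m) :
    8 * ∑ k ∈ range (n+2), m.choose k ≤ 7 * 2^m := by
  obtain ⟨j, rfl⟩ : ∃ j, m = 2*n+1+j := ⟨m - (2*n+1), by omega⟩
  clear hm
  induction j with
  | zero =>
    obtain ⟨n', rfl⟩ : ∃ n', n = n'+1 := ⟨n - 1, by omega⟩
    have hsum : ∑ k ∈ range (n'+2), (2*(n'+1)+1).choose k = 4^(n'+1) := by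
      have := Nat.sum_range_choose_halfway (n'+1)
      have e : n'+1+1 = n'+2 := by omega
      rw [e] at this
      exact this
    have hstep : ∑ k ∈ range ((n'+1)+2), (2*(n'+1)+1+0).choose k
        = 4^(n'+1) + (2*(n'+1)+1).choose (n'+2) := by
      rw [Nat.add_zero, Finset.sum_range_succ, hsum]
    rw [hstep]
    have hc : (2*(n'+1)+1).choose (n'+2) ≤ 3 * 4^n' := by
      have := central_le n'
      have he : 2*(n'+1)+1 = 2*n'+3 := by ring
      rw [he]
      exact this
    have hpow : 2^(2*(n'+1)+1+0) = 8 * 4^n' := by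
      have e : 2*(n'+1)+1+0 = 2*n'+3 := by omega
      rw [e, pow_add, pow_mul]
      norm_num [mul_comm]
    rw [hpow]
    have h4 : 4^(n'+1) = 4 * 4^n' := by ring
    omega
  | succ j ih =>
    have heq : 2*n+1+(j+1) = (2*n+1+j)+1 := by ring
    rw [heq, sum_choose_succ (2*n+1+j) n]
    have hsub : ∑ k ∈ range (n+1), (2*n+1+j).choose k
        ≤ ∑ k ∈ range (n+2), (2*n+1+j).choose k := by
      apply Finset.sum_le_sum_of_subset
      exact Finset.range_subset_range.mpr (by omega)
    have hpow : 2^((2*n+1+j)+1) = 2 * 2^(2*n+1+j) := by rw [pow_succ]; ring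
    omega

set_option maxHeartbeats 1000000 in
lemma lemB (ε : ℝ) (hε0 : 0 < ε) (hε1 : ε ≤ 1) (n m : ℕ)
    (hn : 22 ≤ ε * n) (hm : (2+ε) * n ≤ (m:ℝ)) :
    (∑ k ∈ range (n+2), (m.choose k : ℝ))
      ≤ Real.exp (-(ε^2 * Real.log (8/7) / 40) * n) * 2^m := by
  set γ : ℝ := ε^2 * Real.log (8/7) / 40 with hγdef
  set s : ℝ := ε/(4+ε) with hsdef
  have h4ε : (0:ℝ) < 4 + ε := by linarith
  have hs0 : 0 < s := div_pos hε0 h4ε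
  have hsl : s ≤ ε/4 := by
    rw [hsdef, div_le_div_iff₀ h4ε (by norm_num)]
    nlinarith
  have hsu : ε/5 ≤ s := by
    rw [hsdef, div_le_div_iff₀ (by norm_num) h4ε]
    nlinarith
  set t : ℝ := 1 - s with htdef
  have ht0 : 0 < t := by rw [htdef]; nlinarith
  have ht1 : t ≤ 1 := by rw [htdef]; nlinarith
  set u : ℝ := (1+ε/4)*s with hudef
  have hu0 : 0 < u := by rw [hudef]; positivity
  have huu : u ≤ (5/4)*(ε/4) := by
    rw [hudef]
    apply mul_le_mul (by linarith) hsl hs0.le (by norm_num)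
  have heq : t * (1 + u) = 1 := by
    rw [htdef, hudef, hsdef]; field_simp; ring
  have hlog0 : 0 < Real.log (8/7) := Real.log_pos (by norm_num)
  have hlog1 : Real.log (8/7) ≤ 1/7 := by
    have := Real.log_le_sub_one_of_pos (x := (8/7 : ℝ)) (by norm_num)
    linarith
  have hγ' : γ ≤ ε^2/280 := by
    rw [hγdef]
    nlinarith [sq_nonneg ε]
  have hγ0 : 0 < γ := by rw [hγdef]; positivity
  clear_value u t s γ
  have hN0 : (0:ℝ) ≤ n := Nat.cast_nonneg n
  have hN22 : (22:ℝ) ≤ n := by nlinarith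
  have hnm : n + 1 ≤ m := by
    have : ((n:ℝ)) + 1 ≤ (m:ℝ) := by nlinarith
    exact_mod_cast this
  -- Step 1 : sum * t^(n+1) ≤ (1+t)^m
  have hsum : (∑ k ∈ range (n+2), (m.choose k : ℝ)) * t^(n+1) ≤ (1+t)^m := by
    calc (∑ k ∈ range (n+2), (m.choose k : ℝ)) * t^(n+1)
        = ∑ k ∈ range (n+2), (m.choose k : ℝ) * t^(n+1) := by rw [Finset.sum_mul]
      _ ≤ ∑ k ∈ range (n+2), (m.choose k : ℝ) * t^k := by
          apply Finset.sum_le_sum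
          intro k hk
          apply mul_le_mul_of_nonneg_left _ (Nat.cast_nonneg _)
          exact pow_le_pow_of_le_one ht0.le ht1 (by
            have := Finset.mem_range.mp hk; omega)
      _ ≤ ∑ k ∈ range (m+1), (m.choose k : ℝ) * t^k := by
          apply Finset.sum_le_sum_of_subset_of_nonneg
          · exact Finset.range_subset_range.mpr (by omega)
          · intro k _ _
            positivity
      _ = (1+t)^m := by
          rw [add_comm 1 t, add_pow]
          apply Finset.sum_congr rfl
          intro k _
          rw [one_pow]
          ring
  -- exp bounds
  have ha : 1 - s/2 ≤ Real.exp (-(s/2)) := by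
    have := Real.add_one_le_exp (-(s/2)); linarith
  have hb : Real.exp (-u) ≤ t := by
    have h1 : (1:ℝ) + u ≤ Real.exp u := by
      have := Real.add_one_le_exp u; linarith
    have h2 : Real.exp (-u) = 1 / Real.exp u := by
      rw [Real.exp_neg]; ring
    rw [h2]
    have h3 : 1 / Real.exp u ≤ 1 / (1+u) :=
      one_div_le_one_div_of_le (by linarith) h1
    have h4 : 1 / (1+u) = t := by
      rw [eq_comm, eq_div_iff (by linarith)]
      exact heq
    linarith
  -- key arithmetic inequality
  have hkey : γ*n + u*((n:ℝ)+1) ≤ (s/2)*((2+ε)*n) := by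
    have hεN : (0:ℝ) ≤ ε * n := by linarith
    have k1 : (ε/5)*(ε*n) ≤ s*(ε*n) := mul_le_mul_of_nonneg_right hsu hεN
    have k2 : γ*n ≤ (ε^2/280)*n := mul_le_mul_of_nonneg_right hγ' hN0
    have k4 : ε*22 ≤ ε*(ε*n) := mul_le_mul_of_nonneg_left hn hε0.le
    have k6 : u*(n:ℝ) = s*n + (ε/4)*(s*n) := by rw [hudef]; ring
    linarith [k1, k2, k4, huu, k6]
  have hchain : (1+t)^m ≤ Real.exp (-γ*n) * t^(n+1) * 2^m := by
    have e1 : (1+t)^m = 2^m * (1 - s/2)^m := by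
      rw [← mul_pow]
      congr 1
      rw [htdef]; ring
    have e2 : (1 - s/2)^m ≤ Real.exp (-(s/2))^m :=
      pow_le_pow_left₀ (by nlinarith) ha m
    have e3 : Real.exp (-(s/2))^m = Real.exp ((m:ℝ) * -(s/2)) := by
      rw [Real.exp_nat_mul]
    have e4 : Real.exp ((m:ℝ) * -(s/2)) ≤ Real.exp (-(s/2)*((2+ε)*n)) := by
      apply Real.exp_le_exp.mpr
      nlinarith
    have e5 : Real.exp (-(s/2)*((2+ε)*n)) ≤ Real.exp (-γ*n + -u*((n:ℝ)+1)) := by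
      apply Real.exp_le_exp.mpr
      nlinarith [hkey]
    have e6 : Real.exp (-γ*n + -u*((n:ℝ)+1)) = Real.exp (-γ*n) * Real.exp (-u)^(n+1) := by
      rw [Real.exp_add]
      congr 1
      rw [← Real.exp_nat_mul]
      congr 1
      push_cast
      ring
    have e7 : Real.exp (-u)^(n+1) ≤ t^(n+1) :=
      pow_le_pow_left₀ (Real.exp_nonneg _) hb (n+1)
    calc (1+t)^m = 2^m * (1 - s/2)^m := e1
      _ ≤ 2^m * Real.exp (-(s/2))^m := by
          apply mul_le_mul_of_nonneg_left e2 (by positivity)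
      _ = 2^m * Real.exp ((m:ℝ) * -(s/2)) := by rw [e3]
      _ ≤ 2^m * (Real.exp (-γ*n) * Real.exp (-u)^(n+1)) := by
          apply mul_le_mul_of_nonneg_left _ (by positivity)
          rw [← e6]
          exact le_trans e4 e5
      _ ≤ 2^m * (Real.exp (-γ*n) * t^(n+1)) := by
          apply mul_le_mul_of_nonneg_left _ (by positivity)
          exact mul_le_mul_of_nonneg_left e7 (Real.exp_nonneg _)
      _ = Real.exp (-γ*n) * t^(n+1) * 2^m := by ring
  -- combine
  have hfinal : (∑ k ∈ range (n+2), (m.choose k : ℝ)) * t^(n+1)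
      ≤ (Real.exp (-γ*n) * 2^m) * t^(n+1) := by
    calc (∑ k ∈ range (n+2), (m.choose k : ℝ)) * t^(n+1) ≤ (1+t)^m := hsum
      _ ≤ Real.exp (-γ*n) * t^(n+1) * 2^m := hchain
      _ = (Real.exp (-γ*n) * 2^m) * t^(n+1) := by ring
  exact le_of_mul_le_mul_right hfinal (by positivity)

end Aux

open scoped Classical in
theorem stmt1 (ε : ℝ) (hε0 : 0 < ε) (hε1 : ε ≤ 1) :
    ∃ γ : ℝ, 0 < γ ∧
      ∀ (n : ℕ) (X : Finset (Fin n → ℝ)),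
        ((2 + ε) * n ≤ (X.card : ℝ)) →
        ((X.powerset.filter (fun P => LinSep n P (X \ P))).card : ℝ) ≤
          Real.exp (-γ * n) * 2 ^ X.card := by
  have hlog0 : 0 < Real.log (8/7) := Real.log_pos (by norm_num)
  refine ⟨ε^2 * Real.log (8/7) / 40, by positivity, ?_⟩
  intro n X hX
  set m := X.card with hmdef
  rcases Nat.eq_zero_or_pos n with hn0 | hn1
  · subst hn0
    have h1 : ((X.powerset.filter (fun P => LinSep 0 P (X \ P))).card : ℝ)
        ≤ ((2:ℝ))^m := by
      have h2 : (X.powerset.filter (fun P => LinSep 0 P (X \ P))).card ≤ 2^m := by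
        calc (X.powerset.filter (fun P => LinSep 0 P (X \ P))).card
            ≤ X.powerset.card := Finset.card_filter_le _ _
          _ = 2^m := by rw [Finset.card_powerset]
      exact_mod_cast h2
    simpa using h1
  · have hcle : (X.powerset.filter (fun P => LinSep n P (X \ P))).card
        ≤ ∑ k ∈ range (n+2), m.choose k := count_le n X
    have hcleR : ((X.powerset.filter (fun P => LinSep n P (X \ P))).card : ℝ)
        ≤ ∑ k ∈ range (n+2), (m.choose k : ℝ) := by
      calc ((X.powerset.filter (fun P => LinSep n P (X \ P))).card : ℝ)
          ≤ ((∑ k ∈ range (n+2), m.choose k : ℕ) : ℝ) := by exact_mod_cast hcle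
        _ = ∑ k ∈ range (n+2), (m.choose k : ℝ) := by push_cast; ring
    by_cases hA : ε * n ≤ 22
    · -- small n : use the 7/8 bound
      have hm2n : 2*n+1 ≤ m := by
        have hr : (2:ℝ)*n < m := by
          have hεn : ε * n > 0 := by positivity
          nlinarith
        have : 2*n < m := by exact_mod_cast hr
        omega
      have h8 := lemA n m hn1 hm2n
      have h8R : (∑ k ∈ range (n+2), (m.choose k : ℝ)) ≤ (7/8) * 2^m := by
        have : ((8 * ∑ k ∈ range (n+2), m.choose k : ℕ) : ℝ)
            ≤ ((7 * 2^m : ℕ) : ℝ) := by exact_mod_cast h8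
        push_cast at this
        linarith
      have hexp : (7/8 : ℝ) ≤ Real.exp (-(ε^2 * Real.log (8/7) / 40) * n) := by
        have hγn : ε^2 * Real.log (8/7) / 40 * n ≤ Real.log (8/7) := by
          have hεn0 : (0:ℝ) ≤ ε * n := by positivity
          have h1 : ε^2 * (n:ℝ) ≤ 22 := by nlinarith
          nlinarith
        have h2 : -(ε^2 * Real.log (8/7) / 40) * n ≥ -Real.log (8/7) := by linarith
        calc (7/8 : ℝ) = Real.exp (-Real.log (8/7)) := by
              rw [Real.exp_neg, Real.exp_log (by norm_num)]
              norm_num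
          _ ≤ Real.exp (-(ε^2 * Real.log (8/7) / 40) * n) := Real.exp_le_exp.mpr h2
      calc ((X.powerset.filter (fun P => LinSep n P (X \ P))).card : ℝ)
          ≤ ∑ k ∈ range (n+2), (m.choose k : ℝ) := hcleR
        _ ≤ (7/8) * 2^m := h8R
        _ ≤ Real.exp (-(ε^2 * Real.log (8/7) / 40) * n) * 2^m := by
            apply mul_le_mul_of_nonneg_right hexp (by positivity)
    · -- large n : Chernoff-type bound
      push_neg at hA
      exact hcleR.trans (lemB ε hε0 hε1 n m hA.le hX)
end

section
/- If a family F of subsets of an m-point set has Vapnik–Chervonenkis dimension at most d, then |F| ≤ sum_{i=0}^{d} binomial(m, i) (Sauer–Shelah lemma). -/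
-- Sauer–Shelah lemma: if a family F of subsets of an m-point set X has
-- VC dimension at most d (every shattered S ⊆ X has |S| ≤ d), then
-- |F| ≤ ∑_{i=0}^{d} C(m,i).
theorem stmt9 {α : Type*} [DecidableEq α] (X : Finset α) (m d : ℕ) (hX : X.card = m)
    (F : Finset (Finset α)) (hF : ∀ A ∈ F, A ⊆ X)
    (hVC : ∀ S : Finset α, S ⊆ X →
      (∀ T : Finset α, T ⊆ S → ∃ A ∈ F, S ∩ A = T) → S.card ≤ d) :
    F.card ≤ ∑ i ∈ Finset.range (d + 1), m.choose i := by
  have h1 : F.card ≤ F.shatterer.card := F.card_le_card_shatterer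
  have h2 : F.shatterer ⊆ (Finset.range (d + 1)).biUnion (fun i => X.powersetCard i) := by
    intro s hs
    rw [Finset.mem_shatterer] at hs
    have hsX : s ⊆ X := by
      obtain ⟨A, hA, hsA⟩ := hs (Finset.Subset.refl s)
      exact (Finset.inter_eq_left.mp hsA).trans (hF A hA)
    have hcard : s.card ≤ d := hVC s hsX (fun T hT => hs hT)
    rw [Finset.mem_biUnion]
    exact ⟨s.card, Finset.mem_range.mpr (Nat.lt_succ_of_le hcard),
      Finset.mem_powersetCard.mpr ⟨hsX, rfl⟩⟩
  calc F.card ≤ F.shatterer.card := h1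
    _ ≤ ((Finset.range (d + 1)).biUnion (fun i => X.powersetCard i)).card :=
        Finset.card_le_card h2
    _ ≤ ∑ i ∈ Finset.range (d + 1), (X.powersetCard i).card := Finset.card_biUnion_le
    _ = ∑ i ∈ Finset.range (d + 1), m.choose i := by
        simp [Finset.card_powersetCard, hX]
end

section
/- Let ε > 0 be a constant and m ≥ (2+ε)n. If x^1,...,x^m and y^1,...,y^m are all chosen independently and uniformly at random from {0,1}^n, then the probability that there exists a McCulloch-Pitts dynamical system Φ : {0,1}^n → {0,1}^n with y^i = Φ(x^i) for all i is at most e^{-δ n} for some constant δ > 0 depending only on ε (for n sufficiently large). -/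
def toR {n : ℕ} (x : Fin n → Bool) : Fin n → ℝ := fun j => if x j then 1 else 0

def IsMPSystem {n : ℕ} (Φ : (Fin n → Bool) → (Fin n → Bool)) : Prop :=
  ∀ k : Fin n, ∃ (w : Fin n → ℝ) (θ : ℝ),
    ∀ x : Fin n → Bool, Φ x k = true ↔ ∑ j, w j * toR x j ≥ θ

open Finset

lemma vc_bound {n m : ℕ} (x : Fin m → Fin n → Bool)
    (𝒜 : Finset (Finset (Fin m)))
    (h𝒜 : ∀ A ∈ 𝒜, ∃ (w : Fin n → ℝ) (θ : ℝ), ∀ i, i ∈ A ↔ ∑ j, w j * toR (x i) j ≥ θ)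
    (S : Finset (Fin m)) (hS : 𝒜.Shatters S) : S.card ≤ n + 1 := by
  by_contra hcon
  push_neg at hcon
  obtain ⟨T, hTS, hTcard⟩ := Finset.exists_subset_card_eq (Nat.succ_le_of_lt hcon)
  have hST : 𝒜.Shatters T := hS.mono_right hTS
  classical
  set q : T → (Fin n → ℝ) := fun i => toR (x i.1) with hq
  have hdep : ¬ AffineIndependent ℝ q := by
    intro h
    have h1 := h.card_le_finrank_succ
    have h2 : Module.finrank ℝ (vectorSpan ℝ (Set.range q)) ≤ n := by
      calc Module.finrank ℝ (vectorSpan ℝ (Set.range q)) ≤ Module.finrank ℝ (Fin n → ℝ) :=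
            Submodule.finrank_le _
        _ = n := Module.finrank_fin_fun (R := ℝ)
    have h3 : Fintype.card T = n + 2 := by simpa using hTcard
    omega
  obtain ⟨I, p, hpI, hpIc⟩ := Convex.radon_partition hdep
  set t : Finset (Fin m) := (T.attach.filter (fun i => i ∈ I)).image Subtype.val with ht
  have htT : t ⊆ T := by
    intro a ha
    simp only [ht, mem_image, mem_filter, mem_attach, true_and] at ha
    obtain ⟨b, _, rfl⟩ := ha
    exact b.2
  obtain ⟨u, hu𝒜, hTu⟩ := hST htT
  obtain ⟨w, θ, hw⟩ := h𝒜 u hu𝒜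
  have hlin : IsLinearMap ℝ (fun z : Fin n → ℝ => ∑ j, w j * z j) := by
    constructor
    · intro a b; simp [mul_add, Finset.sum_add_distrib]
    · intro c a; simp [Finset.mul_sum]; ring_nf; simp [mul_comm, mul_assoc, mul_left_comm]
  have hP : p ∈ {z : Fin n → ℝ | θ ≤ ∑ j, w j * z j} := by
    refine convexHull_min ?_ (convex_halfSpace_ge hlin θ) hpI
    rintro z ⟨i, hiI, rfl⟩
    have hit : i.1 ∈ t := by
      simp only [ht, mem_image, mem_filter, mem_attach, true_and]
      exact ⟨i, hiI, rfl⟩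
    have hiu : i.1 ∈ u := by
      rw [← hTu] at hit; exact (mem_inter.1 hit).2
    exact (hw i.1).1 hiu
  have hQ : p ∈ {z : Fin n → ℝ | ∑ j, w j * z j < θ} := by
    refine convexHull_min ?_ (convex_halfSpace_lt hlin θ) hpIc
    rintro z ⟨i, hiI, rfl⟩
    have hit : i.1 ∉ t := by
      simp only [ht, mem_image, mem_filter, mem_attach, true_and]
      rintro ⟨b, hbI, hb⟩
      have : b = i := Subtype.ext hb
      exact hiI (this ▸ hbI)
    have hiu : i.1 ∉ u := by
      intro h'
      exact hit (hTu ▸ mem_inter.2 ⟨i.2, h'⟩)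
    have := (hw i.1).not
    simp only [hiu, false_iff, not_le] at this
    exact not_le.1 (fun hge => hiu ((hw i.1).2 hge))
  exact absurd hP (by simpa using hQ)


open scoped Classical in
noncomputable def Dset {n m : ℕ} (x : Fin m → Fin n → Bool) : Finset (Fin m → Bool) :=
  Finset.univ.filter (fun c => ∃ (w : Fin n → ℝ) (θ : ℝ),
    ∀ i, c i = true ↔ ∑ j, w j * toR (x i) j ≥ θ)

lemma Dset_card_le {n m : ℕ} (x : Fin m → Fin n → Bool) :
    (Dset x).card ≤ ∑ k ∈ Finset.range (n + 2), m.choose k := by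
  classical
  set 𝒜 : Finset (Finset (Fin m)) := (Dset x).image (fun c => univ.filter (fun i => c i = true))
    with h𝒜def
  have hcard : (Dset x).card = 𝒜.card := by
    rw [h𝒜def, card_image_of_injOn]
    intro c _ c' _ h
    funext i
    have : (i ∈ univ.filter (fun i => c i = true)) ↔ (i ∈ univ.filter (fun i => c' i = true)) := by
      simp only at h
      rw [h]
    simp only [mem_filter, mem_univ, true_and] at this
    cases hc : c i <;> cases hc' : c' i <;> simp_all
  have h𝒜 : ∀ A ∈ 𝒜, ∃ (w : Fin n → ℝ) (θ : ℝ), ∀ i, i ∈ A ↔ ∑ j, w j * toR (x i) j ≥ θ := by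
    intro A hA
    simp only [h𝒜def, mem_image] at hA
    obtain ⟨c, hc, rfl⟩ := hA
    simp only [Dset, mem_filter, mem_univ, true_and] at hc
    obtain ⟨w, θ, hw⟩ := hc
    exact ⟨w, θ, fun i => by simp [hw i]⟩
  have hsub : 𝒜.shatterer ⊆ (Finset.range (n + 2)).biUnion
      (fun k => Finset.powersetCard k (univ : Finset (Fin m))) := by
    intro S hS
    rw [mem_shatterer] at hS
    have := vc_bound x 𝒜 h𝒜 S hS
    simp only [mem_biUnion, mem_range, mem_powersetCard]
    exact ⟨S.card, by omega, subset_univ _, rfl⟩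
  calc (Dset x).card = 𝒜.card := hcard
    _ ≤ 𝒜.shatterer.card := Finset.card_le_card_shatterer 𝒜
    _ ≤ _ := card_le_card hsub
    _ ≤ ∑ k ∈ Finset.range (n + 2), (Finset.powersetCard k (univ : Finset (Fin m))).card :=
        card_biUnion_le
    _ = ∑ k ∈ Finset.range (n + 2), m.choose k := by
        simp [Finset.card_powersetCard]

open scoped Classical in
lemma count_le_s14 {n m : ℕ} :
    (Finset.univ.filter
          (fun p : (Fin m → Fin n → Bool) × (Fin m → Fin n → Bool) =>
            ∃ Φ : (Fin n → Bool) → (Fin n → Bool),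
              IsMPSystem Φ ∧ ∀ i, p.2 i = Φ (p.1 i))).card
      ≤ Fintype.card (Fin m → Fin n → Bool) * (∑ k ∈ Finset.range (n + 2), m.choose k) ^ n := by
  classical
  set E := Finset.univ.filter
          (fun p : (Fin m → Fin n → Bool) × (Fin m → Fin n → Bool) =>
            ∃ Φ : (Fin n → Bool) → (Fin n → Bool),
              IsMPSystem Φ ∧ ∀ i, p.2 i = Φ (p.1 i)) with hE
  have key : E.card ≤ ((univ : Finset (Fin m → Fin n → Bool)).sigma
      (fun x => Fintype.piFinset (fun _ : Fin n => Dset x))).card := by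
    apply Finset.card_le_card_of_injOn (fun p => ⟨p.1, fun k i => p.2 i k⟩)
    · intro p hp
      rw [hE, mem_coe, mem_filter] at hp
      obtain ⟨Φ, hΦ, hpy⟩ := hp.2
      simp only [mem_coe, mem_sigma, mem_univ, true_and, Fintype.mem_piFinset]
      intro k
      obtain ⟨w, θ, hw⟩ := hΦ k
      simp only [Dset, mem_filter, mem_univ, true_and]
      exact ⟨w, θ, fun i => by rw [hpy i]; exact hw (p.1 i)⟩
    · intro p _ p' _ h
      simp only [Sigma.mk.inj_iff] at h
      obtain ⟨h1, h2⟩ := h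
      ext i k
      · rw [h1]
      · have := congrFun (congrFun (eq_of_heq h2) k) i
        exact this
  rw [hE] at key ⊢
  refine key.trans ?_
  rw [Finset.card_sigma]
  have : ∀ x : Fin m → Fin n → Bool,
      (Fintype.piFinset (fun _ : Fin n => Dset x)).card ≤
        (∑ k ∈ Finset.range (n + 2), m.choose k) ^ n := by
    intro x
    rw [Fintype.card_piFinset]
    calc ∏ _k : Fin n, (Dset x).card ≤ ∏ _k : Fin n, (∑ k ∈ Finset.range (n + 2), m.choose k) :=
          Finset.prod_le_prod (fun _ _ => Nat.zero_le _) (fun _ _ => Dset_card_le x)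
      _ = _ := by simp
  calc ∑ x : Fin m → Fin n → Bool, (Fintype.piFinset (fun _ : Fin n => Dset x)).card
      ≤ ∑ _x : Fin m → Fin n → Bool, (∑ k ∈ Finset.range (n + 2), m.choose k) ^ n :=
        Finset.sum_le_sum (fun x _ => this x)
    _ = _ := by simp [mul_comm]

lemma binom_tail {ε : ℝ} (hε : 0 < ε) : ∃ N : ℕ, 1 ≤ N ∧ ∀ n, N ≤ n → ∀ m : ℕ,
    (2 + ε) * n ≤ (m : ℝ) →
    ((∑ k ∈ Finset.range (n + 2), m.choose k : ℕ) : ℝ) ≤ Real.exp (-1) * 2 ^ m := by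
  set β : ℝ := 1 / (2 + ε) with hβdef
  have h2ε : (0:ℝ) < 2 + ε := by linarith
  have hβ0 : 0 < β := by positivity
  have hβ : β < 1 / 2 := by
    rw [hβdef, div_lt_div_iff₀ h2ε two_pos]; linarith
  set t : ℝ := (1 + 2 * β) / 2 with htdef
  have ht0 : 0 < t := by rw [htdef]; linarith
  have ht1 : t < 1 := by rw [htdef]; linarith
  set c : ℝ := (1 - 2 * β) ^ 2 / (4 * (1 + 2 * β)) with hcdef
  have hc : 0 < c := by
    rw [hcdef]; apply div_pos (by nlinarith) (by nlinarith)
  set L : ℝ := Real.log (1 / t) with hLdef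
  have hL0 : 0 ≤ L := Real.log_nonneg (by rw [le_div_iff₀ ht0]; linarith)
  refine ⟨⌈(L + 1) / (c * (2 + ε))⌉₊ + 1, by omega, ?_⟩
  intro n hn m hm
  have hcm : L + 1 ≤ c * m := by
    have h1 : (L + 1) / (c * (2 + ε)) ≤ (⌈(L + 1) / (c * (2 + ε))⌉₊ + 1 : ℕ) := by
      push_cast
      exact (Nat.le_ceil _).trans (by linarith)
    have h2 : ((⌈(L + 1) / (c * (2 + ε))⌉₊ + 1 : ℕ) : ℝ) ≤ n := by exact_mod_cast Nat.cast_le.2 hn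
    have h3 : (L + 1) / (c * (2 + ε)) ≤ (n : ℝ) := h1.trans h2
    have h4 : L + 1 ≤ c * (2 + ε) * n := by
      rw [div_le_iff₀ (by positivity)] at h3; linarith [h3]
    calc L + 1 ≤ c * (2 + ε) * n := h4
      _ ≤ c * m := by rw [mul_assoc]; exact mul_le_mul_of_nonneg_left hm hc.le
  have hnm : (n : ℝ) ≤ β * m := by
    rw [hβdef]
    rw [div_mul_eq_mul_div, le_div_iff₀ h2ε]
    linarith [hm]
  -- sum bound
  set S : ℝ := ((∑ k ∈ Finset.range (n + 2), m.choose k : ℕ) : ℝ) with hSdef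
  have hSsum : S = ∑ k ∈ Finset.range (n + 2), ((m.choose k : ℝ)) := by
    rw [hSdef]; push_cast; ring
  have hS : S * t ^ (n + 1) ≤ (1 + t) ^ m := by
    have e1 : S * t ^ (n + 1) = ∑ k ∈ Finset.range (n + 2), (m.choose k : ℝ) * t ^ (n + 1) := by
      rw [hSsum, Finset.sum_mul]
    have e2 : ∑ k ∈ Finset.range (n + 2), (m.choose k : ℝ) * t ^ (n + 1)
        ≤ ∑ k ∈ Finset.range (n + 2), (m.choose k : ℝ) * t ^ k := by
      apply Finset.sum_le_sum
      intro k hk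
      have hk' : k ≤ n + 1 := by simp at hk; omega
      exact mul_le_mul_of_nonneg_left (pow_le_pow_of_le_one ht0.le ht1.le hk')
        (Nat.cast_nonneg _)
    have e3 : ∑ k ∈ Finset.range (n + 2), (m.choose k : ℝ) * t ^ k
        ≤ ∑ k ∈ Finset.range (n + m + 2), (m.choose k : ℝ) * t ^ k := by
      apply Finset.sum_le_sum_of_subset_of_nonneg (Finset.range_subset_range.2 (by omega))
      intro k _ _
      positivity
    have e4 : ∑ k ∈ Finset.range (n + m + 2), (m.choose k : ℝ) * t ^ k
        = ∑ k ∈ Finset.range (m + 1), (m.choose k : ℝ) * t ^ k := by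
      symm
      apply Finset.sum_subset (Finset.range_subset_range.2 (by omega))
      intro k _ hk
      have : m < k := by simp only [Finset.mem_range, not_lt] at hk; omega
      simp [Nat.choose_eq_zero_of_lt this]
    have e5 : ∑ k ∈ Finset.range (m + 1), (m.choose k : ℝ) * t ^ k = (1 + t) ^ m := by
      rw [add_comm 1 t, add_pow]
      apply Finset.sum_congr rfl
      intro k _
      simp [mul_comm]
    linarith [e2, e3, e1 ▸ le_refl (S * t ^ (n+1)), e4 ▸ e5]
  -- pass to exponentials
  have hSle : S ≤ Real.exp ((m : ℝ) * Real.log (1 + t) + ((n : ℝ) + 1) * L) := by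
    have h1t : (0:ℝ) < 1 + t := by linarith
    have hpow1 : ((1 + t) : ℝ) ^ m = Real.exp ((m : ℝ) * Real.log (1 + t)) := by
      rw [Real.exp_nat_mul, Real.exp_log h1t]
    have hpow2 : ((1 / t) : ℝ) ^ (n + 1) = Real.exp (((n : ℝ) + 1) * L) := by
      rw [hLdef]
      rw [show ((n : ℝ) + 1) = ((n + 1 : ℕ) : ℝ) by push_cast; ring]
      rw [Real.exp_nat_mul, Real.exp_log (by positivity)]
    have : S ≤ (1 + t) ^ m / t ^ (n + 1) := by
      rw [le_div_iff₀ (pow_pos ht0 _)]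
      exact hS
    calc S ≤ (1 + t) ^ m / t ^ (n + 1) := this
      _ = (1 + t) ^ m * (1 / t) ^ (n + 1) := by
          rw [one_div, inv_pow, div_eq_mul_inv]
      _ = Real.exp ((m : ℝ) * Real.log (1 + t)) * Real.exp (((n : ℝ) + 1) * L) := by
          rw [hpow1, hpow2]
      _ = Real.exp ((m : ℝ) * Real.log (1 + t) + ((n : ℝ) + 1) * L) := (Real.exp_add _ _).symm
  -- exponent bound
  have keylog : Real.log (1 + t) + β * L ≤ Real.log 2 - c := by
    have h1 : Real.log (1 + t) ≤ Real.log 2 + ((1 + t) / 2 - 1) := by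
      have := Real.log_le_sub_one_of_pos (show (0:ℝ) < (1 + t) / 2 by linarith)
      rw [Real.log_div (by linarith) two_ne_zero] at this
      linarith
    have h2 : L ≤ 1 / t - 1 := by
      rw [hLdef]
      exact Real.log_le_sub_one_of_pos (by positivity)
    have h3 : β * L ≤ β * (1 / t - 1) := mul_le_mul_of_nonneg_left h2 hβ0.le
    have h4 : (1 + t) / 2 - 1 + β * (1 / t - 1) = -c := by
      rw [htdef, hcdef]
      have h5 : (1 + 2 * β) ≠ 0 := by nlinarith
      field_simp
      ring
    linarith
  have hexp : (m : ℝ) * Real.log (1 + t) + ((n : ℝ) + 1) * L ≤ (m : ℝ) * Real.log 2 - 1 := by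
    have hm0 : (0:ℝ) ≤ m := Nat.cast_nonneg _
    have h1 : ((n : ℝ) + 1) * L ≤ β * m * L + L := by
      have h := mul_le_mul_of_nonneg_right hnm hL0
      linear_combination h
    have h2 : (m : ℝ) * Real.log (1 + t) + β * m * L ≤ m * (Real.log 2 - c) := by
      have h := mul_le_mul_of_nonneg_left keylog hm0
      linear_combination h
    have h3 : (m : ℝ) * (Real.log 2 - c) = m * Real.log 2 - c * m := by ring
    linarith [hcm]
  calc S ≤ Real.exp ((m : ℝ) * Real.log (1 + t) + ((n : ℝ) + 1) * L) := hSle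
    _ ≤ Real.exp ((m : ℝ) * Real.log 2 - 1) := Real.exp_le_exp.2 hexp
    _ = Real.exp (-1) * 2 ^ m := by
        rw [sub_eq_add_neg, Real.exp_add, Real.exp_nat_mul, Real.exp_log two_pos, mul_comm]

-- For ε > 0 there are δ > 0 and N (depending only on ε) such that for n ≥ N
-- and m ≥ (2+ε)n, if x¹,...,xᵐ and y¹,...,yᵐ are i.i.d. uniform on {0,1}ⁿ
-- (uniform counting over all pairs of tuples), the probability that some
-- McCulloch-Pitts dynamical system Φ satisfies yⁱ = Φ(xⁱ) for all i is at
-- most e^{-δn}.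
open scoped Classical in
theorem stmt14 (ε : ℝ) (hε : 0 < ε) :
    ∃ δ : ℝ, 0 < δ ∧ ∃ N : ℕ, ∀ n ≥ N, ∀ m : ℕ, (2 + ε) * n ≤ (m : ℝ) →
      ((Finset.univ.filter
          (fun p : (Fin m → Fin n → Bool) × (Fin m → Fin n → Bool) =>
            ∃ Φ : (Fin n → Bool) → (Fin n → Bool),
              IsMPSystem Φ ∧ ∀ i, p.2 i = Φ (p.1 i))).card : ℝ)
        ≤ Real.exp (-δ * n) *
            (Fintype.card ((Fin m → Fin n → Bool) × (Fin m → Fin n → Bool)) : ℝ) := by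
  obtain ⟨N, hN1, hNnum⟩ := binom_tail hε
  refine ⟨1, one_pos, N, ?_⟩
  intro n hn m hm
  set B : ℕ := ∑ k ∈ Finset.range (n + 2), m.choose k with hBdef
  set X : ℕ := Fintype.card (Fin m → Fin n → Bool) with hXdef
  have hcount : ((Finset.univ.filter
          (fun p : (Fin m → Fin n → Bool) × (Fin m → Fin n → Bool) =>
            ∃ Φ : (Fin n → Bool) → (Fin n → Bool),
              IsMPSystem Φ ∧ ∀ i, p.2 i = Φ (p.1 i))).card : ℝ) ≤ (X : ℝ) * (B : ℝ) ^ n := by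
    exact_mod_cast count_le_s14
  have hBle : (B : ℝ) ≤ Real.exp (-1) * 2 ^ m := hNnum n hn m hm
  have hBpow : (B : ℝ) ^ n ≤ Real.exp (-(1:ℝ) * n) * 2 ^ (m * n) := by
    calc (B : ℝ) ^ n ≤ (Real.exp (-1) * 2 ^ m) ^ n :=
          pow_le_pow_left₀ (Nat.cast_nonneg _) hBle n
      _ = Real.exp (-1) ^ n * ((2:ℝ) ^ m) ^ n := mul_pow _ _ _
      _ = Real.exp (-(1:ℝ) * n) * 2 ^ (m * n) := by
          rw [← Real.exp_nat_mul, ← pow_mul]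
          ring_nf
  have hX : (X : ℝ) = 2 ^ (n * m) := by
    rw [hXdef]
    have : Fintype.card (Fin m → Fin n → Bool) = 2 ^ (n * m) := by
      simp [pow_mul]
    rw [this]
    push_cast
    ring
  have hprod : (Fintype.card ((Fin m → Fin n → Bool) × (Fin m → Fin n → Bool)) : ℝ)
      = (X : ℝ) * (X : ℝ) := by
    rw [hXdef]; push_cast [Fintype.card_prod]; ring
  calc ((Finset.univ.filter
          (fun p : (Fin m → Fin n → Bool) × (Fin m → Fin n → Bool) =>
            ∃ Φ : (Fin n → Bool) → (Fin n → Bool),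
              IsMPSystem Φ ∧ ∀ i, p.2 i = Φ (p.1 i))).card : ℝ)
      ≤ (X : ℝ) * (B : ℝ) ^ n := hcount
    _ ≤ (X : ℝ) * (Real.exp (-(1:ℝ) * n) * 2 ^ (m * n)) :=
        mul_le_mul_of_nonneg_left hBpow (Nat.cast_nonneg _)
    _ = Real.exp (-(1:ℝ) * n) * ((X:ℝ) * 2 ^ (m * n)) := by ring
    _ = Real.exp (-(1:ℝ) * n) *
          (Fintype.card ((Fin m → Fin n → Bool) × (Fin m → Fin n → Bool)) : ℝ) := by
        rw [hprod, hX, ← pow_add]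
        ring_nf
end

section
/- The number of dichotomies of an m-point set X in general position in R^n that are linearly separable equals 2·sum_{i=0}^{n} binomial(m-1, i) (Cover's counting theorem); in particular, when m ≤ n+1 this equals 2^m, so all dichotomies are separable. -/
open Filter Module Topology

open scoped Classical

namespace CoverAux

variable {ι : Type*} {E : Type*} [AddCommGroup E] [Module ℝ E]

/-- strict sign pattern -/
def Pat (φ : ι → E →ₗ[ℝ] ℝ) (T P : Finset ι) (w : E) : Prop :=
  ∀ i ∈ T, if i ∈ P then 0 < φ i w else φ i w < 0

def Rea (φ : ι → E →ₗ[ℝ] ℝ) (W : Submodule ℝ E) (T P : Finset ι) : Prop :=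
  ∃ w ∈ W, Pat φ T P w

noncomputable def cnt (φ : ι → E →ₗ[ℝ] ℝ) (W : Submodule ℝ E) (T : Finset ι) : ℕ :=
  (T.powerset.filter (Rea φ W T)).card

def GP (φ : ι → E →ₗ[ℝ] ℝ) (W : Submodule ℝ E) (T : Finset ι) : Prop :=
  ∀ S ⊆ T, S.card ≤ finrank ℝ W → ∀ a : ι → ℝ,
    (∀ w ∈ W, ∑ i ∈ S, a i * φ i w = 0) → ∀ i ∈ S, a i = 0

noncomputable def g (m d : ℕ) : ℕ :=
  if m = 0 then 1 else 2 * ∑ i ∈ Finset.range d, (m - 1).choose i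

lemma g_succ (m d : ℕ) : g (m + 1) (d + 1) = g m (d + 1) + g m d := by
  rcases Nat.eq_zero_or_pos m with rfl | hm
  · have : ∀ x ∈ Finset.range (d+1), Nat.choose 0 x = if x = 0 then 1 else 0 := by
      intro x _; rcases x with _ | x <;> simp
    simp [g, Finset.sum_congr rfl this]
  · obtain ⟨k, rfl⟩ := Nat.exists_eq_succ_of_ne_zero hm.ne'
    simp only [g, Nat.succ_ne_zero, if_false, Nat.add_sub_cancel, Nat.succ_eq_add_one]
    rw [Finset.sum_range_succ' (fun x => (k+1).choose x) d,
        Finset.sum_range_succ' (fun x => k.choose x) d]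
    simp only [Nat.choose_succ_succ, Nat.choose_zero_right, Finset.sum_add_distrib]
    ring


variable {φ : ι → E →ₗ[ℝ] ℝ} {W : Submodule ℝ E} {v : ι} {T' Q P : Finset ι}

lemma pat_apply (h : Pat φ T P w) (hi : i ∈ T) :
    if i ∈ P then 0 < φ i w else φ i w < 0 := h i hi

lemma pat_perturb (h : Pat φ T' Q w) (u : E) {l : Filter ℝ} (hl : l ≤ 𝓝 0) :
    ∀ᶠ t in l, Pat φ T' Q (w + t • u) := by
  refine Eventually.filter_mono hl ?_
  simp only [Pat]
  rw [Finset.eventually_all]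
  intro i hi
  have hc : Tendsto (fun t : ℝ => φ i w + t * φ i u) (𝓝 0) (𝓝 (φ i w)) := by
    have : Tendsto (fun t : ℝ => φ i w + t * φ i u) (𝓝 0) (𝓝 (φ i w + 0 * φ i u)) := by
      exact (tendsto_const_nhds.add ((continuous_id.mul continuous_const).tendsto 0))
    simpa using this
  have h2 := h i hi
  by_cases hiQ : i ∈ Q
  · rw [if_pos hiQ] at h2
    filter_upwards [hc.eventually_const_lt h2] with t ht
    rw [if_pos hiQ]
    simpa [map_add, map_smul, smul_eq_mul] using ht
  · rw [if_neg hiQ] at h2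
    filter_upwards [hc.eventually_lt_const h2] with t ht
    rw [if_neg hiQ]
    simpa [map_add, map_smul, smul_eq_mul] using ht

lemma pat_perturb_pos (h : Pat φ T' Q w) (u : E) :
    ∃ t : ℝ, 0 < t ∧ Pat φ T' Q (w + t • u) := by
  have h1 : ∀ᶠ t in 𝓝[>] (0:ℝ), Pat φ T' Q (w + t • u) := pat_perturb h u nhdsWithin_le_nhds
  obtain ⟨t, ht1, ht2⟩ := (h1.and eventually_mem_nhdsWithin).exists
  exact ⟨t, ht2, ht1⟩

lemma pat_perturb_neg (h : Pat φ T' Q w) (u : E) :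
    ∃ t : ℝ, t < 0 ∧ Pat φ T' Q (w + t • u) := by
  have h1 : ∀ᶠ t in 𝓝[<] (0:ℝ), Pat φ T' Q (w + t • u) := pat_perturb h u nhdsWithin_le_nhds
  obtain ⟨t, ht1, ht2⟩ := (h1.and eventually_mem_nhdsWithin).exists
  exact ⟨t, ht2, ht1⟩


lemma pat_of_insert {Q' : Finset ι}
    (hQQ' : ∀ i ∈ T', (i ∈ Q' ↔ i ∈ Q)) (h : Pat φ (insert v T') Q' w) :
    Pat φ T' Q w := by
  intro i hi
  have h2 := h i (Finset.mem_insert_of_mem hi)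
  by_cases hiQ : i ∈ Q
  · rw [if_pos hiQ]; rw [if_pos ((hQQ' i hi).mpr hiQ)] at h2; exact h2
  · rw [if_neg hiQ]; rw [if_neg (fun hh => hiQ ((hQQ' i hi).mp hh))] at h2; exact h2

lemma rea_of_insert_self (hv : v ∉ T') (hQT : Q ⊆ T')
    (h : Rea φ W (insert v T') (insert v Q)) : Rea φ W T' Q := by
  obtain ⟨w, hw, hp⟩ := h
  refine ⟨w, hw, pat_of_insert (fun i hi => ?_) hp⟩
  have hne : i ≠ v := fun h => hv (h ▸ hi)
  simp [Finset.mem_insert, hne]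

lemma rea_of_insert (hv : v ∉ T') (hQT : Q ⊆ T')
    (h : Rea φ W (insert v T') Q) : Rea φ W T' Q := by
  obtain ⟨w, hw, hp⟩ := h
  exact ⟨w, hw, pat_of_insert (fun i hi => Iff.rfl) hp⟩

lemma pat_insert_of_pos (hv : v ∉ T') (hp : Pat φ T' Q w) (hpos : 0 < φ v w) :
    Pat φ (insert v T') (insert v Q) w := by
  intro i hi
  rcases Finset.mem_insert.mp hi with rfl | hi'
  · rw [if_pos (Finset.mem_insert_self i Q)]; exact hpos
  · have h2 := hp i hi'
    have hne : i ≠ v := fun h => hv (h ▸ hi')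
    by_cases hiQ : i ∈ Q
    · rw [if_pos (Finset.mem_insert_of_mem hiQ)]; rwa [if_pos hiQ] at h2
    · rw [if_neg (by simp [hne, hiQ])]; rwa [if_neg hiQ] at h2

lemma pat_insert_of_neg (hv : v ∉ T') (hQT : Q ⊆ T') (hp : Pat φ T' Q w) (hneg : φ v w < 0) :
    Pat φ (insert v T') Q w := by
  intro i hi
  rcases Finset.mem_insert.mp hi with rfl | hi'
  · rw [if_neg (fun h => hv (hQT h))]; exact hneg
  · exact hp i hi'


lemma rea_or (hv : v ∉ T') (hQT : Q ⊆ T') {u₀ : E} (hu₀W : u₀ ∈ W) (hu₀ : φ v u₀ = 1) :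
    (Rea φ W (insert v T') (insert v Q) ∨ Rea φ W (insert v T') Q) ↔ Rea φ W T' Q := by
  constructor
  · rintro (h | h)
    · exact rea_of_insert_self hv hQT h
    · exact rea_of_insert hv hQT h
  · rintro ⟨w, hw, hp⟩
    rcases lt_trichotomy (φ v w) 0 with hneg | hzero | hpos
    · exact Or.inr ⟨w, hw, pat_insert_of_neg hv hQT hp hneg⟩
    · obtain ⟨t, ht, hp'⟩ := pat_perturb_pos hp u₀
      refine Or.inl ⟨w + t • u₀, add_mem hw (Submodule.smul_mem _ _ hu₀W),
        pat_insert_of_pos hv hp' ?_⟩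
      simp [map_add, map_smul, hzero, hu₀, ht]
    · exact Or.inl ⟨w, hw, pat_insert_of_pos hv hp hpos⟩

lemma rea_and (hv : v ∉ T') (hQT : Q ⊆ T') {u₀ : E} (hu₀W : u₀ ∈ W) (hu₀ : φ v u₀ = 1) :
    (Rea φ W (insert v T') (insert v Q) ∧ Rea φ W (insert v T') Q) ↔
      Rea φ (W ⊓ LinearMap.ker (φ v)) T' Q := by
  constructor
  · rintro ⟨⟨w₁, hw₁, hp₁⟩, ⟨w₂, hw₂, hp₂⟩⟩
    have ha : 0 < φ v w₁ := by
      have := hp₁ v (Finset.mem_insert_self v T')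
      rwa [if_pos (Finset.mem_insert_self v Q)] at this
    have hb : φ v w₂ < 0 := by
      have := hp₂ v (Finset.mem_insert_self v T')
      rwa [if_neg (fun h => hv (hQT h))] at this
    set a := φ v w₁
    set b := φ v w₂
    have hab : 0 < a - b := by linarith
    set l : ℝ := -b / (a - b) with hl_def
    have hl : 0 < l := div_pos (by linarith) hab
    have hl1 : l < 1 := by rw [div_lt_one hab]; linarith
    refine ⟨l • w₁ + (1 - l) • w₂, Submodule.mem_inf.mpr ⟨?_, ?_⟩, ?_⟩
    · exact add_mem (Submodule.smul_mem _ _ hw₁) (Submodule.smul_mem _ _ hw₂)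
    · rw [LinearMap.mem_ker]
      have : l * a + (1 - l) * b = 0 := by
        rw [hl_def]; field_simp; ring
      simpa [map_add, map_smul, smul_eq_mul] using this
    · intro i hi
      have h1 := hp₁ i (Finset.mem_insert_of_mem hi)
      have h2 := hp₂ i (Finset.mem_insert_of_mem hi)
      have hne : i ≠ v := fun h => hv (h ▸ hi)
      have hval : φ i (l • w₁ + (1 - l) • w₂) = l * φ i w₁ + (1 - l) * φ i w₂ := by
        simp [map_add, map_smul, smul_eq_mul]
      by_cases hiQ : i ∈ Q
      · rw [if_pos (Finset.mem_insert_of_mem hiQ)] at h1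
        rw [if_pos hiQ] at h2
        rw [if_pos hiQ, hval]
        nlinarith
      · rw [if_neg (by simp [hne, hiQ])] at h1
        rw [if_neg hiQ] at h2
        rw [if_neg hiQ, hval]
        nlinarith
  · rintro ⟨w, hw, hp⟩
    obtain ⟨hwW, hwK⟩ := Submodule.mem_inf.mp hw
    have hzero : φ v w = 0 := LinearMap.mem_ker.mp hwK
    constructor
    · obtain ⟨t, ht, hp'⟩ := pat_perturb_pos hp u₀
      refine ⟨w + t • u₀, add_mem hwW (Submodule.smul_mem _ _ hu₀W),
        pat_insert_of_pos hv hp' ?_⟩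
      simp [map_add, map_smul, hzero, hu₀, ht]
    · obtain ⟨t, ht, hp'⟩ := pat_perturb_neg hp u₀
      refine ⟨w + t • u₀, add_mem hwW (Submodule.smul_mem _ _ hu₀W),
        pat_insert_of_neg hv hQT hp' ?_⟩
      simp [map_add, map_smul, hzero, hu₀, ht]

lemma rea_mono_W {W' : Submodule ℝ E} (hWW' : W' ≤ W) (h : Rea φ W' T' Q) : Rea φ W T' Q := by
  obtain ⟨w, hw, hp⟩ := h; exact ⟨w, hWW' hw, hp⟩


lemma cnt_insert (hv : v ∉ T') {u₀ : E} (hu₀W : u₀ ∈ W) (hu₀ : φ v u₀ = 1) :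
    cnt φ W (insert v T') = cnt φ W T' + cnt φ (W ⊓ LinearMap.ker (φ v)) T' := by
  classical
  set W' := W ⊓ LinearMap.ker (φ v) with hW'
  have hinj : ∀ Q₁ ∈ T'.powerset, ∀ Q₂ ∈ T'.powerset,
      insert v Q₁ = insert v Q₂ → Q₁ = Q₂ := by
    intro Q₁ h₁ Q₂ h₂ heq
    have hv₁ : v ∉ Q₁ := fun h => hv (Finset.mem_powerset.mp h₁ h)
    have hv₂ : v ∉ Q₂ := fun h => hv (Finset.mem_powerset.mp h₂ h)
    rw [← Finset.erase_insert hv₁, ← Finset.erase_insert hv₂, heq]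
  have hdisj : Disjoint T'.powerset (T'.powerset.image (insert v)) := by
    rw [Finset.disjoint_left]
    intro Q hQ1 hQ2
    obtain ⟨Q', hQ', rfl⟩ := Finset.mem_image.mp hQ2
    exact hv (Finset.mem_powerset.mp hQ1 (Finset.mem_insert_self v Q'))
  unfold cnt
  simp only [Finset.card_filter]
  rw [Finset.powerset_insert]
  rw [Finset.sum_union hdisj]
  rw [Finset.sum_image hinj]
  rw [← Finset.sum_add_distrib (s := T'.powerset)
    (f := fun Q => if Rea φ W (insert v T') Q then (1:ℕ) else 0)
    (g := fun Q => if Rea φ W (insert v T') (insert v Q) then (1:ℕ) else 0)]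
  rw [← Finset.sum_add_distrib (s := T'.powerset)
    (f := fun Q => if Rea φ W T' Q then (1:ℕ) else 0)
    (g := fun Q => if Rea φ W' T' Q then (1:ℕ) else 0)]
  refine Finset.sum_congr rfl (fun Q hQ => ?_)
  have hQT : Q ⊆ T' := Finset.mem_powerset.mp hQ
  have hOr := rea_or hv hQT hu₀W hu₀ (φ := φ)
  have hAnd := rea_and hv hQT hu₀W hu₀ (φ := φ)
  by_cases h1 : Rea φ W' T' Q
  · have hW : Rea φ W T' Q := rea_mono_W inf_le_left h1
    have hb := hAnd.mpr h1
    rw [if_pos hb.2, if_pos hb.1, if_pos hW, if_pos h1]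
  · by_cases h2 : Rea φ W T' Q
    · rcases hOr.mpr h2 with hA | hB
      · have hnB : ¬ Rea φ W (insert v T') Q := fun hB => h1 (hAnd.mp ⟨hA, hB⟩)
        rw [if_neg hnB, if_pos hA, if_pos h2, if_neg h1]
      · have hnA : ¬ Rea φ W (insert v T') (insert v Q) := fun hA => h1 (hAnd.mp ⟨hA, hB⟩)
        rw [if_pos hB, if_neg hnA, if_pos h2, if_neg h1]
    · have hnA : ¬ Rea φ W (insert v T') (insert v Q) := fun hA => h2 (hOr.mp (Or.inl hA))
      have hnB : ¬ Rea φ W (insert v T') Q := fun hB => h2 (hOr.mp (Or.inr hB))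
      rw [if_neg hnA, if_neg hnB, if_neg h1, if_neg h2]


lemma finrank_inf_ker [FiniteDimensional ℝ E] {u : E} (huW : u ∈ W) (hu : φ v u ≠ 0) :
    finrank ℝ W = finrank ℝ (W ⊓ LinearMap.ker (φ v) : Submodule ℝ E) + 1 := by
  classical
  set f : W →ₗ[ℝ] ℝ := (φ v).domRestrict W with hf
  have hker : LinearMap.ker f = Submodule.comap W.subtype (W ⊓ LinearMap.ker (φ v)) := by
    rw [hf, LinearMap.ker_domRestrict, Submodule.comap_inf, Submodule.comap_subtype_self,
      top_inf_eq]
  have hkereq : finrank ℝ (LinearMap.ker f) =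
      finrank ℝ (W ⊓ LinearMap.ker (φ v) : Submodule ℝ E) := by
    rw [hker]
    exact LinearEquiv.finrank_eq (Submodule.comapSubtypeEquivOfLe inf_le_left)
  have hrange : finrank ℝ (LinearMap.range f) = 1 := by
    have hle : finrank ℝ (LinearMap.range f) ≤ 1 := by
      have := Submodule.finrank_le (LinearMap.range f)
      simpa using this
    have hne : finrank ℝ (LinearMap.range f) ≠ 0 := by
      intro h0
      have : LinearMap.range f = ⊥ := Submodule.finrank_eq_zero.mp h0
      have hfu : f ⟨u, huW⟩ = 0 := by
        have hmem : f ⟨u, huW⟩ ∈ LinearMap.range f := LinearMap.mem_range_self f _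
        rw [this] at hmem
        exact (Submodule.mem_bot ℝ).mp hmem
      exact hu (by simpa [hf] using hfu)
    omega
  have := LinearMap.finrank_range_add_finrank_ker f
  rw [hrange, hkereq] at this
  omega

lemma gp_mono {T : Finset ι} (hTT' : T' ⊆ T) (h : GP φ W T) : GP φ W T' :=
  fun S hS => h S (hS.trans hTT')

lemma gp_exists_ne (hGP : GP φ W (insert v T')) (hpos : 0 < finrank ℝ W) :
    ∃ u ∈ W, φ v u ≠ 0 := by
  by_contra hc
  push_neg at hc
  have := hGP {v} (Finset.singleton_subset_iff.mpr (Finset.mem_insert_self v T'))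
    (by simpa using Nat.succ_le_of_lt hpos) (fun _ => 1)
    (fun w hw => by simpa using hc w hw) v (Finset.mem_singleton_self v)
  exact one_ne_zero this

lemma gp_descend [FiniteDimensional ℝ E] (hv : v ∉ T') (hGP : GP φ W (insert v T'))
    {u₀ : E} (hu₀W : u₀ ∈ W) (hu₀ : φ v u₀ = 1)
    (hrank : finrank ℝ W = finrank ℝ (W ⊓ LinearMap.ker (φ v) : Submodule ℝ E) + 1) :
    GP φ (W ⊓ LinearMap.ker (φ v)) T' := by
  classical
  intro S hS hcard a ha i hi
  have hvS : v ∉ S := fun h => hv (hS h)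
  set a' : ι → ℝ := Function.update a v (-(∑ j ∈ S, a j * φ j u₀)) with ha'
  have hni : i ≠ v := fun h => hvS (h ▸ hi)
  have key : ∀ w ∈ W, ∑ j ∈ insert v S, a' j * φ j w = 0 := by
    intro w hw
    set t := φ v w with htdef
    have hw' : w - t • u₀ ∈ W ⊓ LinearMap.ker (φ v) := by
      refine Submodule.mem_inf.mpr ⟨sub_mem hw (Submodule.smul_mem _ _ hu₀W), ?_⟩
      rw [LinearMap.mem_ker]
      simp [map_sub, map_smul, hu₀, htdef]
    have hsum0 : ∑ j ∈ S, a j * φ j (w - t • u₀) = 0 := ha _ hw'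
    rw [Finset.sum_insert hvS]
    have hupd : ∀ j ∈ S, a' j * φ j w = a j * φ j w := by
      intro j hj
      rw [ha', Function.update_of_ne (fun h => hvS (by rw [← h]; exact hj))]
    rw [Finset.sum_congr rfl hupd]
    have hsplit : ∀ j ∈ S, a j * φ j w = a j * φ j (w - t • u₀) + t * (a j * φ j u₀) := by
      intro j hj
      simp [map_sub, map_smul, smul_eq_mul]
      ring
    rw [Finset.sum_congr rfl hsplit, Finset.sum_add_distrib, hsum0, ← Finset.mul_sum]
    rw [ha', Function.update_self]
    ring
  have := hGP (insert v S) (Finset.insert_subset_insert v hS)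
    (by
      rw [Finset.card_insert_of_notMem hvS, hrank]
      omega) a' key i (Finset.mem_insert_of_mem hi)
  rwa [ha', Function.update_of_ne hni] at this


theorem cnt_eq [FiniteDimensional ℝ E] (φ : ι → E →ₗ[ℝ] ℝ) (T : Finset ι) :
    ∀ W : Submodule ℝ E, GP φ W T → cnt φ W T = g T.card (finrank ℝ W) := by
  classical
  induction T using Finset.induction_on with
  | empty =>
    intro W _
    have : Rea φ W ∅ ∅ := ⟨0, zero_mem W, fun i hi => absurd hi (Finset.notMem_empty i)⟩
    simp [cnt, g, Finset.powerset_empty, Finset.filter_singleton, this]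
  | insert _ _ hv =>
    rename_i v T' ih
    intro W hGP
    rcases Nat.eq_zero_or_pos (finrank ℝ W) with h0 | hpos
    · have hbot : W = ⊥ := Submodule.finrank_eq_zero.mp h0
      have hempty : (insert v T').powerset.filter (Rea φ W (insert v T')) = ∅ := by
        rw [Finset.filter_eq_empty_iff]
        rintro P hP ⟨w, hw, hp⟩
        rw [hbot, Submodule.mem_bot] at hw
        have := hp v (Finset.mem_insert_self v T')
        rw [hw] at this
        by_cases hvP : v ∈ P
        · rw [if_pos hvP] at this; simp at this
        · rw [if_neg hvP] at this; simp at this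
      rw [cnt, hempty, h0]
      simp [g, Finset.card_insert_of_notMem hv]
    · obtain ⟨u, huW, hu⟩ := gp_exists_ne hGP hpos
      set u₀ : E := (φ v u)⁻¹ • u with hu₀def
      have hu₀W : u₀ ∈ W := Submodule.smul_mem _ _ huW
      have hu₀ : φ v u₀ = 1 := by
        rw [hu₀def, map_smul, smul_eq_mul, inv_mul_cancel₀ hu]
      have hrank := finrank_inf_ker (φ := φ) (v := v) huW hu
      rw [cnt_insert hv hu₀W hu₀, Finset.card_insert_of_notMem hv]
      rw [ih W (gp_mono (Finset.subset_insert v T') hGP),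
        ih _ (gp_descend hv hGP hu₀W hu₀ hrank), hrank]
      rw [g_succ]

noncomputable def lift (n : ℕ) (x : Fin n → ℝ) : ((Fin n → ℝ) × ℝ) →ₗ[ℝ] ℝ where
  toFun w := (∑ j, x j * w.1 j) + w.2
  map_add' a b := by
    simp only [Prod.fst_add, Prod.snd_add, Pi.add_apply, mul_add, Finset.sum_add_distrib]
    ring
  map_smul' c a := by
    simp only [Prod.smul_fst, Prod.smul_snd, Pi.smul_apply, smul_eq_mul, RingHom.id_apply]
    rw [mul_add, Finset.mul_sum]
    congr 1
    exact Finset.sum_congr rfl (fun j _ => by ring)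

lemma lift_apply (n : ℕ) (x : Fin n → ℝ) (w : (Fin n → ℝ) × ℝ) :
    lift n x w = (∑ j, x j * w.1 j) + w.2 := rfl

lemma finrank_top_prod (n : ℕ) :
    finrank ℝ (⊤ : Submodule ℝ ((Fin n → ℝ) × ℝ)) = n + 1 := by
  rw [finrank_top, finrank_prod, finrank_pi, finrank_self, Fintype.card_fin]

lemma gp_top (n : ℕ) (X : Finset (Fin n → ℝ))
    (hGP : ∀ S : Finset (Fin n → ℝ), S ⊆ X → S.card ≤ n + 1 →
      AffineIndependent ℝ ((↑) : S → (Fin n → ℝ))) :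
    GP (lift n) (⊤ : Submodule ℝ ((Fin n → ℝ) × ℝ)) X := by
  classical
  intro S hS hcard a ha i hi
  rw [finrank_top_prod] at hcard
  have hAI := hGP S hS hcard
  have hsum : ∑ x ∈ S, a x = 0 := by
    have := ha (0, 1) trivial
    simpa [lift_apply] using this
  have hvec : ∀ j : Fin n, ∑ x ∈ S, a x * x j = 0 := by
    intro j
    have := ha (Pi.single j 1, 0) trivial
    simp only [lift_apply, add_zero] at this
    have hinner : ∀ x : Fin n → ℝ, ∑ j', x j' * (Pi.single j (1:ℝ) : Fin n → ℝ) j' = x j := by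
      intro x
      rw [Finset.sum_eq_single j]
      · simp
      · intro b _ hb; simp [Pi.single_eq_of_ne hb]
      · simp
    rw [Finset.sum_congr rfl (fun x _ => by rw [hinner x])] at this
    exact this
  have h2 : ∑ x ∈ S.attach, a ↑x • ((↑) : S → (Fin n → ℝ)) x = 0 := by
    funext j
    rw [Finset.sum_apply]
    have : ∑ x ∈ S.attach, (a ↑x • ((↑x : Fin n → ℝ))) j = ∑ x ∈ S.attach, a ↑x * (↑x : Fin n → ℝ) j := by
      exact Finset.sum_congr rfl (fun x _ => by simp [Pi.smul_apply, smul_eq_mul])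
    rw [this, Finset.sum_attach S (fun x => a x * x j), hvec j]
    rfl
  have h1 : ∑ x ∈ S.attach, a ↑x = 0 := by
    rw [Finset.sum_attach S (fun x => a x)]; exact hsum
  exact affineIndependent_iff.mp hAI S.attach (fun x => a ↑x) h1 h2 ⟨i, hi⟩ (Finset.mem_attach _ _)

end CoverAux



-- X is in general position: every subset of at most n+1 points is affinely
-- independent.
def GeneralPosition (n : ℕ) (X : Finset (Fin n → ℝ)) : Prop :=
  ∀ S : Finset (Fin n → ℝ), S ⊆ X → S.card ≤ n + 1 →
    AffineIndependent ℝ ((↑) : S → (Fin n → ℝ))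

-- Cover's counting theorem: an m-point set in general position in ℝⁿ has
-- exactly 2·∑_{i=0}^{n} C(m-1,i) linearly separable dichotomies; in
-- particular, when m ≤ n+1 this equals 2^m (all dichotomies are separable).
open CoverAux
open scoped Classical in
theorem stmt16 (n m : ℕ) (X : Finset (Fin n → ℝ)) (hm : 0 < m) (hX : X.card = m)
    (hGP : GeneralPosition n X) :
    (X.powerset.filter (fun P => LinSep n P (X \ P))).card =
      2 * ∑ i ∈ Finset.range (n + 1), (m - 1).choose i ∧
    (m ≤ n + 1 →
      (X.powerset.filter (fun P => LinSep n P (X \ P))).card = 2 ^ m) := by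
  classical
  have hfilter : X.powerset.filter (fun P => LinSep n P (X \ P)) =
      X.powerset.filter (Rea (lift n) (⊤ : Submodule ℝ ((Fin n → ℝ) × ℝ)) X) := by
    refine Finset.filter_congr (fun P hP => ?_)
    have hPX : P ⊆ X := Finset.mem_powerset.mp hP
    constructor
    · rintro ⟨y, c, h1, h2⟩
      refine ⟨(y, -c), trivial, fun x hx => ?_⟩
      by_cases hxP : x ∈ P
      · rw [if_pos hxP, lift_apply]
        have := h1 x hxP
        simpa using sub_pos.mpr this
      · rw [if_neg hxP, lift_apply]
        have := h2 x (Finset.mem_sdiff.mpr ⟨hx, hxP⟩)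
        simpa using sub_neg.mpr this
    · rintro ⟨w, _, hp⟩
      refine ⟨w.1, -w.2, fun x hx => ?_, fun x hx => ?_⟩
      · have := hp x (hPX hx)
        rw [if_pos hx, lift_apply] at this
        linarith
      · obtain ⟨hxX, hxP⟩ := Finset.mem_sdiff.mp hx
        have := hp x hxX
        rw [if_neg hxP, lift_apply] at this
        linarith
  have hcnt := cnt_eq (lift n) X (⊤ : Submodule ℝ ((Fin n → ℝ) × ℝ)) (gp_top n X hGP)
  rw [cnt, finrank_top_prod, hX] at hcnt
  have hg : g m (n + 1) = 2 * ∑ i ∈ Finset.range (n + 1), (m - 1).choose i := by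
    rw [g, if_neg hm.ne']
  have key : (X.powerset.filter (fun P => LinSep n P (X \ P))).card =
      2 * ∑ i ∈ Finset.range (n + 1), (m - 1).choose i := by
    rw [hfilter, ← hg]
    exact hcnt
  refine ⟨key, fun hmn => ?_⟩
  rw [key]
  have hsub : Finset.range m ⊆ Finset.range (n + 1) :=
    Finset.range_subset_range.mpr hmn
  have hzero : ∀ i ∈ Finset.range (n + 1), i ∉ Finset.range m → (m - 1).choose i = 0 := by
    intro i _ hi
    rw [Finset.mem_range, not_lt] at hi
    exact Nat.choose_eq_zero_of_lt (by omega)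
  rw [← Finset.sum_subset hsub hzero]
  obtain ⟨k, rfl⟩ := Nat.exists_eq_succ_of_ne_zero hm.ne'
  rw [Nat.succ_sub_one]
  rw [show k.succ = k + 1 from rfl, Nat.sum_range_choose k, pow_succ]
  ring
end
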